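/- arXiv:2403.18742 — 3 statements merged into one kernel-verified Lean document; each statement's English description precedes it below -/
import Mathlib

section
/- Let W, D ∈ ℝᵈ be nonzero and let μ ∈ ℝᵈ be a unit vector. Suppose (W·μ)/‖W‖ ≥ φ and (D·μ)/‖D‖ ≥ ψ with ψ ≥ φ ≥ 0. Then the cosine similarity of W + D with μ satisfies ((W+D)·μ)/‖W+D‖ ≥ φ + (ψ - φ)·‖D‖/(‖W‖ + ‖D‖). -/
open scoped RealInnerProductSpace

theorem boundary_improvement (d : ℕ) (W D μ : EuclideanSpace ℝ (Fin d))
    (hW : W ≠ 0) (hD : D ≠ 0) (hμ : ‖μ‖ = 1)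
    (φ ψ : ℝ) (hφ0 : 0 ≤ φ) (hφψ : φ ≤ ψ) (hψ1 : ψ ≤ 1)
    (hWcos : ⟪W, μ⟫ / ‖W‖ ≥ φ) (hDcos : ⟪D, μ⟫ / ‖D‖ ≥ ψ) :
    ⟪W + D, μ⟫ / ‖W + D‖ ≥ φ + (ψ - φ) * ‖D‖ / (‖W‖ + ‖D‖) := by
  have ha : (0:ℝ) < ‖W‖ := norm_pos_iff.mpr hW
  have hb : (0:ℝ) < ‖D‖ := norm_pos_iff.mpr hD
  have hψ0 : 0 ≤ ψ := le_trans hφ0 hφψ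
  have hW' : φ * ‖W‖ ≤ ⟪W, μ⟫ := (le_div_iff₀ ha).mp hWcos
  have hD' : ψ * ‖D‖ ≤ ⟪D, μ⟫ := (le_div_iff₀ hb).mp hDcos
  have hsum : φ * ‖W‖ + ψ * ‖D‖ ≤ ⟪W + D, μ⟫ := by
    rw [inner_add_left]; linarith
  have hnn : 0 ≤ φ * ‖W‖ + ψ * ‖D‖ := by positivity
  have hrhs : φ + (ψ - φ) * ‖D‖ / (‖W‖ + ‖D‖) = (φ * ‖W‖ + ψ * ‖D‖) / (‖W‖ + ‖D‖) := by
    field_simp; ring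
  rw [hrhs]
  by_cases hWD : W + D = 0
  · have h0 : ⟪W + D, μ⟫ = 0 := by rw [hWD]; simp
    have : φ * ‖W‖ + ψ * ‖D‖ = 0 := le_antisymm (h0 ▸ hsum) hnn
    rw [h0, hWD]
    simp [this]
  · have hc : (0:ℝ) < ‖W + D‖ := norm_pos_iff.mpr hWD
    have htri : ‖W + D‖ ≤ ‖W‖ + ‖D‖ := norm_add_le W D
    calc (φ * ‖W‖ + ψ * ‖D‖) / (‖W‖ + ‖D‖)
        ≤ (φ * ‖W‖ + ψ * ‖D‖) / ‖W + D‖ := by gcongr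
      _ ≤ ⟪W + D, μ⟫ / ‖W + D‖ := by gcongr
end

section
/- Under the hypotheses of the margin lemma, symmetrically: if x·μ ≤ -m, ‖x‖ ≤ R, S = W·μ ∈ (0,1], and m ≥ R√(1-S²)/S, then W·x ≤ 0. -/
open scoped RealInnerProductSpace

theorem margin_implies_negative_classification (dim : ℕ)
    (μ W v x : EuclideanSpace ℝ (Fin dim)) (S m R : ℝ)
    (hμ : ‖μ‖ = 1) (hW : ‖W‖ = 1) (hS : S = ⟪W, μ⟫)
    (hS0 : 0 < S) (hS1 : S ≤ 1)
    (hv : ‖v‖ = 1) (hvμ : ⟪v, μ⟫ = 0)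
    (hdecomp : W = S • μ + Real.sqrt (1 - S ^ 2) • v)
    (hx : ⟪x, μ⟫ ≤ -m) (hxR : ‖x‖ ≤ R)
    (hm : m ≥ R * Real.sqrt (1 - S ^ 2) / S) :
    ⟪W, x⟫ ≤ 0 := by
  have hR0 : 0 ≤ R := le_trans (norm_nonneg x) hxR
  have hq : 0 ≤ Real.sqrt (1 - S ^ 2) := Real.sqrt_nonneg _
  have hvx : ⟪v, x⟫ ≤ R := by
    calc ⟪v, x⟫ ≤ ‖v‖ * ‖x‖ := real_inner_le_norm v x
    _ ≤ R := by rw [hv, one_mul]; exact hxR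
  have hμx : ⟪μ, x⟫ ≤ -m := by rwa [real_inner_comm]
  have h1 : ⟪W, x⟫ = S * ⟪μ, x⟫ + Real.sqrt (1 - S ^ 2) * ⟪v, x⟫ := by
    rw [hdecomp, inner_add_left, real_inner_smul_left, real_inner_smul_left]
  rw [h1]
  have h2 : S * ⟪μ, x⟫ ≤ S * (-m) := mul_le_mul_of_nonneg_left hμx hS0.le
  have h3 : Real.sqrt (1 - S ^ 2) * ⟪v, x⟫ ≤ Real.sqrt (1 - S ^ 2) * R :=
    mul_le_mul_of_nonneg_left hvx hq
  have hm' : R * Real.sqrt (1 - S ^ 2) ≤ S * m := by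
    rw [ge_iff_le, div_le_iff₀ hS0] at hm
    linarith [hm]
  nlinarith [h2, h3, hm']
end

section
/- Let W be a unit vector in ℝᵈ with cosine similarity S ∈ (0,1] to a unit vector μ. Let P ⊆ ℝᵈ be a finite set of samples, each with norm at most R. If at least p fraction of samples x in P (with labels) satisfy the signed margin condition ℓ(x)·(x·μ) ≥ m where m ≥ R√(1-S²)/S and ℓ(x) ∈ {+1,-1}, then W classifies at least p fraction of P correctly, i.e., ℓ(x)·(W·x) ≥ 0 for all such samples. -/
open scoped RealInnerProductSpace

open Classical in
theorem margin_fraction_accuracy (dim : ℕ)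
    (μ W : EuclideanSpace ℝ (Fin dim)) (S m R p : ℝ)
    (hμ : ‖μ‖ = 1) (hW : ‖W‖ = 1) (hS : S = ⟪W, μ⟫)
    (hS0 : 0 < S) (hS1 : S ≤ 1)
    (hm : m ≥ R * Real.sqrt (1 - S ^ 2) / S)
    (P : Finset (EuclideanSpace ℝ (Fin dim)))
    (ℓ : EuclideanSpace ℝ (Fin dim) → ℝ)
    (hℓ : ∀ x ∈ P, ℓ x = 1 ∨ ℓ x = -1)
    (hR : ∀ x ∈ P, ‖x‖ ≤ R)
    (hp0 : 0 ≤ p) (hp1 : p ≤ 1)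
    (hfrac : (p * P.card : ℝ) ≤ (P.filter fun x => ℓ x * ⟪x, μ⟫ ≥ m).card) :
    (∀ x ∈ P, ℓ x * ⟪x, μ⟫ ≥ m → ℓ x * ⟪W, x⟫ ≥ 0) ∧
    (p * P.card : ℝ) ≤ (P.filter fun x => ℓ x * ⟪W, x⟫ ≥ 0).card := by
  have key : ∀ x ∈ P, ℓ x * ⟪x, μ⟫ ≥ m → ℓ x * ⟪W, x⟫ ≥ 0 := by
    intro x hx hmx
    set V : EuclideanSpace ℝ (Fin dim) := W - S • μ with hV
    have hVnorm2 : ‖V‖ ^ 2 = 1 - S ^ 2 := by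
      rw [hV, norm_sub_sq_real, real_inner_smul_right, norm_smul, hμ, hW,
        ← hS, Real.norm_eq_abs, abs_of_pos hS0]
      ring
    have hVnorm : ‖V‖ = Real.sqrt (1 - S ^ 2) := by
      rw [← hVnorm2, Real.sqrt_sq (norm_nonneg V)]
    have hWx : ⟪W, x⟫ = S * ⟪μ, x⟫ + ⟪V, x⟫ := by
      rw [hV, inner_sub_left, real_inner_smul_left]
      ring
    have hxμ : ⟪x, μ⟫ = ⟪μ, x⟫ := by rw [real_inner_comm]
    have hℓx : |ℓ x| = 1 := by rcases hℓ x hx with h | h <;> simp [h]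
    have hbound : |⟪V, x⟫| ≤ ‖V‖ * ‖x‖ := abs_real_inner_le_norm V x
    have hxR : ‖x‖ ≤ R := hR x hx
    have hsq : (0:ℝ) ≤ Real.sqrt (1 - S ^ 2) := Real.sqrt_nonneg _
    have hSm : S * m ≥ R * Real.sqrt (1 - S ^ 2) := by
      have := (div_le_iff₀ hS0).mp hm
      linarith
    have h1 : ℓ x * ⟪V, x⟫ ≥ -(‖V‖ * ‖x‖) := by
      have : |ℓ x * ⟪V, x⟫| ≤ ‖V‖ * ‖x‖ := by
        rw [abs_mul, hℓx, one_mul]; exact hbound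
      linarith [neg_abs_le (ℓ x * ⟪V, x⟫)]
    have h2 : ‖V‖ * ‖x‖ ≤ R * Real.sqrt (1 - S ^ 2) := by
      rw [hVnorm]
      calc Real.sqrt (1 - S ^ 2) * ‖x‖ ≤ Real.sqrt (1 - S ^ 2) * R :=
            mul_le_mul_of_nonneg_left hxR hsq
        _ = R * Real.sqrt (1 - S ^ 2) := mul_comm _ _
    have h3 : S * (ℓ x * ⟪μ, x⟫) ≥ S * m :=
      mul_le_mul_of_nonneg_left (by rw [← hxμ]; exact hmx) hS0.le
    have : ℓ x * ⟪W, x⟫ = S * (ℓ x * ⟪μ, x⟫) + ℓ x * ⟪V, x⟫ := by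
      rw [hWx]; ring
    rw [this]
    linarith
  refine ⟨key, le_trans hfrac ?_⟩
  have : (P.filter fun x => ℓ x * ⟪x, μ⟫ ≥ m) ⊆
      (P.filter fun x => ℓ x * ⟪W, x⟫ ≥ 0) := by
    intro x hx
    rw [Finset.mem_filter] at hx ⊢
    exact ⟨hx.1, key x hx.1 hx.2⟩
  exact_mod_cast Finset.card_le_card this
end
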